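/- arXiv:1508.06952 — 4 statements merged into one kernel-verified Lean document; each statement's English description precedes it below -/
import Mathlib

section
/- Let ℓ ≥ 1, k ≥ 0, 1 ≤ p ≤ ℓ, and let μ = (c_1, ..., c_n) be integers with ℓ ≥ c_1 ≥ c_2 ≥ ... ≥ c_n ≥ 0 and Σ_{i=1}^n c_i = 2(kℓ + p). Set Λ = Σ_{i=2k+2}^n c_i (with Λ = 0 if 2k+2 > n). If Λ = p, then there exists exactly one semistandard Young tableau of shape ϱ = (ℓ^{2k}, p, p) with content μ, and this unique tableau is proper. -/
/-- `IsSSYT R C r n c T` : the filling `T` (entry `T a b` in row `a`, column `b`,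
both 1-indexed) is a semistandard Young tableau of the shape whose `a`-th row
(for `1 ≤ a ≤ R`) consists of the boxes `(a, b)` with `1 ≤ b ≤ r a` (where
`r a ≤ C`), with entries in `{1, ..., n}`, rows weakly increasing, columns
strictly increasing, and using exactly `c i` entries equal to `i` for each
`1 ≤ i ≤ n`. -/
def IsSSYT (R C : ℕ) (r : ℕ → ℕ) (n : ℕ) (c : ℕ → ℕ) (T : ℕ → ℕ → ℕ) : Prop :=
  (∀ a ∈ Finset.Icc 1 R, ∀ b ∈ Finset.Icc 1 (r a), 1 ≤ T a b ∧ T a b ≤ n) ∧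
  (∀ a ∈ Finset.Icc 1 R, ∀ b b' : ℕ, 1 ≤ b → b ≤ b' → b' ≤ r a → T a b ≤ T a b') ∧
  (∀ a : ℕ, 1 ≤ a → a + 1 ≤ R → ∀ b : ℕ, 1 ≤ b → b ≤ r a → b ≤ r (a + 1) →
    T a b < T (a + 1) b) ∧
  (∀ i : ℕ, 1 ≤ i → i ≤ n →
    ((Finset.Icc 1 R ×ˢ Finset.Icc 1 C).filter
      (fun q => q.2 ≤ r q.1 ∧ T q.1 q.2 = i)).card = c i)

/-- Row lengths of the shape `ϱ = (ℓ^{2k}, p, p)`: rows `1, ..., 2k` have length `ℓ`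
and rows `2k+1`, `2k+2` have length `p`. -/
def rhoRow (l k p : ℕ) (a : ℕ) : ℕ := if a ≤ 2 * k then l else p

/-- A semistandard Young tableau of shape `ϱ = (ℓ^{2k}, p, p)` with content
`(c 1, ..., c n)`. -/
def IsRhoSSYT (l k p n : ℕ) (c : ℕ → ℕ) (T : ℕ → ℕ → ℕ) : Prop :=
  IsSSYT (2 * k + 2) l (rhoRow l k p) n c T

/-- A tableau of shape `ϱ = (ℓ^{2k}, p, p)` is proper if `T (q+2) 1 ≥ T q ℓ`
for all `1 ≤ q ≤ 2k`. -/
def IsProper (l k : ℕ) (T : ℕ → ℕ → ℕ) : Prop :=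
  ∀ q : ℕ, 1 ≤ q → q ≤ 2 * k → T q l ≤ T (q + 2) 1

/-- Two fillings agree on every box of the shape with row lengths `r` and `R` rows. -/
def EqOnShape (R : ℕ) (r : ℕ → ℕ) (T T' : ℕ → ℕ → ℕ) : Prop :=
  ∀ a ∈ Finset.Icc 1 R, ∀ b ∈ Finset.Icc 1 (r a), T a b = T' a b

/-- The content `(c 1, ..., c n)` is `ℓ`-maximal if at least `n - 3` of the
amounts `c i` equal `ℓ`. -/
def IsMaximal (l n : ℕ) (c : ℕ → ℕ) : Prop :=
  n - 3 ≤ ((Finset.Icc 1 n).filter (fun i => c i = l)).card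

/-- A filling is normalized if it vanishes outside the boxes of the shape. -/
def Normalized (R : ℕ) (r : ℕ → ℕ) (T : ℕ → ℕ → ℕ) : Prop :=
  ∀ a b : ℕ, ¬ (1 ≤ a ∧ a ≤ R ∧ 1 ≤ b ∧ b ≤ r a) → T a b = 0

/-!
Fill the boxes in row reading order (left to right, top to bottom) with the content sorted
increasingly; box `(a, b)` follows the `rowStart r a` boxes of the rows above it. Rows of this
filling increase weakly, properness is monotonicity of the reading word, and columns increase
strictly because one step down a column skips `ℓ ≥ c i` positions in the long rows, while the
`p` boxes of row `2k+1` are exactly the last copies of the values `≤ 2k+1`.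

Conversely, in any tableau of shape `ϱ` the `cumContent c (2k+1) = 2kℓ + p` entries `≤ 2k+1`
fill the first `2k+1` rows, so column strictness forces row `a ≤ 2k+1` into `{a, a+1}`. Hence
every entry of a row is at most every entry of the following rows: the reading word is weakly
increasing, and a weakly increasing word is determined by its content.
-/

open Finset

def shapeBoxes (R C : ℕ) (r : ℕ → ℕ) : Finset (ℕ × ℕ) :=
  (Icc 1 R ×ˢ Icc 1 C).filter fun q => q.2 ≤ r q.1

def rowStart (r : ℕ → ℕ) (a : ℕ) : ℕ := ∑ a' ∈ Ico 1 a, r a'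

def cumContent (c : ℕ → ℕ) (i : ℕ) : ℕ := ∑ j ∈ Icc 1 i, c j

/-- The `t`-th smallest entry of the multiset with `c i` copies of each `i ≥ 1`. -/
noncomputable def sortedEntry (c : ℕ → ℕ) (t : ℕ) : ℕ := sInf {i | t ≤ cumContent c i}

noncomputable def readingTableau (r c : ℕ → ℕ) (a b : ℕ) : ℕ := sortedEntry c (rowStart r a + b)

lemma cumContent_zero (c : ℕ → ℕ) : cumContent c 0 = 0 := by
  simp [cumContent]

lemma cumContent_succ (c : ℕ → ℕ) (i : ℕ) : cumContent c (i + 1) = cumContent c i + c (i + 1) :=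
  sum_Icc_succ_top (by omega) c

lemma cumContent_mono (c : ℕ → ℕ) : Monotone (cumContent c) :=
  fun _ _ h => sum_le_sum_of_subset (Icc_subset_Icc_right h)

section Counting

variable {α : Type*} (s : Finset α) (f : α → ℕ)

lemma card_filter_le_succ (i : ℕ) :
    #(s.filter (f · ≤ i + 1)) = #(s.filter (f · ≤ i)) + #(s.filter (f · = i + 1)) := by
  classical
  rw [← card_union_of_disjoint (disjoint_filter.2 fun _ _ h h' => by omega), ← filter_or]
  congr 1
  exact filter_congr fun _ _ => by omega

variable {s f} {c : ℕ → ℕ} {n : ℕ}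

lemma card_filter_le_eq_cumContent (hpos : ∀ x ∈ s, 1 ≤ f x)
    (hcount : ∀ i, 1 ≤ i → i ≤ n → #(s.filter (f · = i)) = c i) :
    ∀ i ≤ n, #(s.filter (f · ≤ i)) = cumContent c i
  | 0, _ => by
    rw [cumContent_zero, card_eq_zero, filter_eq_empty_iff]
    exact fun x hx => by have := hpos x hx; omega
  | i + 1, hi => by
    rw [card_filter_le_succ, card_filter_le_eq_cumContent hpos hcount i (by omega),
      hcount _ (by omega) hi, cumContent_succ]

lemma card_filter_eq_of_card_filter_le
    (hcum : ∀ i ≤ n, #(s.filter (f · ≤ i)) = cumContent c i) {i : ℕ} (h1 : 1 ≤ i) (hi : i ≤ n) :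
    #(s.filter (f · = i)) = c i := by
  obtain ⟨j, rfl⟩ : ∃ j, i = j + 1 := ⟨i - 1, by omega⟩
  have := card_filter_le_succ s f j
  rw [hcum _ hi, hcum j (by omega), cumContent_succ] at this
  omega

end Counting

section SortedEntry

variable {c : ℕ → ℕ} {n t : ℕ}

lemma sortedEntry_le_iff (ht : t ≤ cumContent c n) (i : ℕ) :
    sortedEntry c t ≤ i ↔ t ≤ cumContent c i :=
  ⟨fun h => (Nat.sInf_mem (⟨n, ht⟩ : {i | t ≤ cumContent c i}.Nonempty)).trans
    (cumContent_mono c h), fun h => Nat.sInf_le h⟩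

lemma sortedEntry_mono {t' : ℕ} (ht' : t' ≤ cumContent c n) (h : t ≤ t') :
    sortedEntry c t ≤ sortedEntry c t' :=
  (sortedEntry_le_iff (h.trans ht') _).2 (h.trans ((sortedEntry_le_iff ht' _).1 le_rfl))

lemma sortedEntry_mem_Icc (ht1 : 1 ≤ t) (ht : t ≤ cumContent c n) : sortedEntry c t ∈ Icc 1 n := by
  refine mem_Icc.2 ⟨Nat.one_le_iff_ne_zero.2 fun h0 => ?_, (sortedEntry_le_iff ht n).2 ht⟩
  have := (sortedEntry_le_iff ht 0).1 h0.le
  rw [cumContent_zero] at this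
  omega

lemma cumContent_sortedEntry_lt (ht1 : 1 ≤ t) (ht : t ≤ cumContent c n) :
    cumContent c (sortedEntry c t) < t + c (sortedEntry c t) := by
  obtain ⟨j, hj⟩ : ∃ j, sortedEntry c t = j + 1 :=
    ⟨sortedEntry c t - 1, by have := (mem_Icc.1 (sortedEntry_mem_Icc ht1 ht)).1; omega⟩
  have hlt : ¬ t ≤ cumContent c j := fun h => by
    have := (sortedEntry_le_iff ht j).2 h
    omega
  rw [hj, cumContent_succ]
  exact Nat.add_lt_add_right (not_le.1 hlt) _

end SortedEntry

section ReadingOrder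

variable {R C : ℕ} {r : ℕ → ℕ}

lemma rowStart_succ (r : ℕ → ℕ) {a : ℕ} (ha : 1 ≤ a) : rowStart r (a + 1) = rowStart r a + r a :=
  sum_Ico_succ_top ha r

lemma rowStart_mono (r : ℕ → ℕ) : Monotone (rowStart r) :=
  fun _ _ h => sum_le_sum_of_subset (Ico_subset_Ico_right h)

lemma mem_shapeBoxes {q : ℕ × ℕ} :
    q ∈ shapeBoxes R C r ↔ (1 ≤ q.1 ∧ q.1 ≤ R) ∧ (1 ≤ q.2 ∧ q.2 ≤ C) ∧ q.2 ≤ r q.1 := by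
  simp [shapeBoxes, and_assoc]

lemma rowStart_add_le_rowStart {a a' b : ℕ} (ha : 1 ≤ a) (hb : b ≤ r a) (h : a < a') :
    rowStart r a + b ≤ rowStart r a' :=
  calc rowStart r a + b ≤ rowStart r (a + 1) := by rw [rowStart_succ r ha]; omega
    _ ≤ rowStart r a' := rowStart_mono r h

lemma rowStart_add_le_rowStart_iff {q : ℕ × ℕ} (hq : q ∈ shapeBoxes R C r) (a : ℕ) :
    rowStart r q.1 + q.2 ≤ rowStart r a ↔ q.1 < a := by
  rw [mem_shapeBoxes] at hq
  refine ⟨fun h => not_le.1 fun ha => ?_, rowStart_add_le_rowStart hq.1.1 hq.2.2⟩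
  have := rowStart_mono r ha
  omega

lemma lt_or_eq_of_rowStart_add_le {q q' : ℕ × ℕ} (hq : q ∈ shapeBoxes R C r)
    (hq' : q' ∈ shapeBoxes R C r) (h : rowStart r q.1 + q.2 ≤ rowStart r q'.1 + q'.2) :
    q.1 < q'.1 ∨ q.1 = q'.1 ∧ q.2 ≤ q'.2 := by
  have hle := (rowStart_add_le_rowStart_iff hq (q'.1 + 1)).1
    (h.trans (rowStart_add_le_rowStart (mem_shapeBoxes.1 hq').1.1 (mem_shapeBoxes.1 hq').2.2
      (Nat.lt_succ_self _)))
  rcases Nat.lt_or_eq_of_le (Nat.lt_succ_iff.1 hle) with hlt | heq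
  · exact .inl hlt
  · rw [heq] at h
    exact .inr ⟨heq, by omega⟩

lemma card_filter_product_eq_sum {α β : Type*} (s : Finset α) (t : Finset β)
    (P : α × β → Prop) [DecidablePred P] :
    #((s ×ˢ t).filter P) = ∑ a ∈ s, #(t.filter fun b => P (a, b)) := by
  simp only [card_filter, sum_product]

lemma sum_min_rowStart (r : ℕ → ℕ) (t : ℕ) :
    ∀ R, ∑ a ∈ Icc 1 R, min (r a) (t - rowStart r a) = min t (rowStart r (R + 1))
  | 0 => by simp [rowStart]
  | R + 1 => by
    rw [sum_Icc_succ_top (by omega), sum_min_rowStart r t R, rowStart_succ r (by omega : 1 ≤ R + 1)]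
    omega

lemma card_filter_rowStart_add_le (hr : ∀ a ∈ Icc 1 R, r a ≤ C) (t : ℕ) :
    #((shapeBoxes R C r).filter fun q => rowStart r q.1 + q.2 ≤ t) =
      min t (rowStart r (R + 1)) := by
  rw [shapeBoxes, filter_filter, card_filter_product_eq_sum, ← sum_min_rowStart]
  refine sum_congr rfl fun a ha => ?_
  have hra := hr a ha
  have : (Icc 1 C).filter (fun b => b ≤ r a ∧ rowStart r a + b ≤ t) =
      Icc 1 (min (r a) (t - rowStart r a)) := by
    ext b
    simp only [mem_filter, mem_Icc]
    omega
  rw [this, Nat.card_Icc, Nat.add_sub_cancel]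

end ReadingOrder

namespace IsSSYT

variable {R C n : ℕ} {r c : ℕ → ℕ} {T : ℕ → ℕ → ℕ}

lemma entry_mem_Icc (hT : IsSSYT R C r n c T) {q : ℕ × ℕ} (hq : q ∈ shapeBoxes R C r) :
    T q.1 q.2 ∈ Icc 1 n := by
  rw [mem_shapeBoxes] at hq
  exact Finset.mem_Icc.2 <|
    hT.1 q.1 (Finset.mem_Icc.2 hq.1) q.2 (Finset.mem_Icc.2 ⟨hq.2.1.1, hq.2.2⟩)

lemma card_filter_le (hT : IsSSYT R C r n c T) {i : ℕ} (hi : i ≤ n) :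
    #((shapeBoxes R C r).filter fun q => T q.1 q.2 ≤ i) = cumContent c i :=
  card_filter_le_eq_cumContent (fun _ hq => (Finset.mem_Icc.1 (hT.entry_mem_Icc hq)).1)
    (fun j h1 h2 => by rw [shapeBoxes, filter_filter]; exact hT.2.2.2 j h1 h2) i hi

lemma entry_add_sub_le (hT : IsSSYT R C r n c T) (hr : Antitone r) {a b : ℕ} (ha : 1 ≤ a)
    (hb : 1 ≤ b) : ∀ a', a ≤ a' → a' ≤ R → b ≤ r a' → T a b + (a' - a) ≤ T a' b
  | 0, h, _, _ => by omega
  | a' + 1, h, hR, hb' => by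
    rcases Nat.lt_or_eq_of_le h with h | rfl
    · have := hT.entry_add_sub_le hr ha hb a' (by omega) (by omega) (hb'.trans (hr a'.le_succ))
      have := hT.2.2.1 a' (by omega) hR b hb (hb'.trans (hr a'.le_succ)) hb'
      omega
    · simp

lemma row_le_entry (hT : IsSSYT R C r n c T) (hr : Antitone r) {q : ℕ × ℕ}
    (hq : q ∈ shapeBoxes R C r) : q.1 ≤ T q.1 q.2 := by
  have hq' := mem_shapeBoxes.1 hq
  have := hT.entry_add_sub_le hr le_rfl hq'.2.1.1 q.1 hq'.1.1 hq'.1.2 hq'.2.2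
  have := (hT.1 1 (Finset.mem_Icc.2 ⟨le_rfl, by omega⟩) q.2
    (Finset.mem_Icc.2 ⟨hq'.2.1.1, hq'.2.2.trans (hr hq'.1.1)⟩)).1
  omega

lemma le_of_rowStart_add_le (hT : IsSSYT R C r n c T)
    (hsep : ∀ q ∈ shapeBoxes R C r, ∀ q' ∈ shapeBoxes R C r, q.1 < q'.1 →
      T q.1 q.2 ≤ T q'.1 q'.2)
    {q q' : ℕ × ℕ} (hq : q ∈ shapeBoxes R C r) (hq' : q' ∈ shapeBoxes R C r)
    (h : rowStart r q.1 + q.2 ≤ rowStart r q'.1 + q'.2) : T q.1 q.2 ≤ T q'.1 q'.2 := by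
  rcases lt_or_eq_of_rowStart_add_le hq hq' h with hlt | ⟨heq, hle⟩
  · exact hsep q hq q' hq' hlt
  · have hq1 := mem_shapeBoxes.1 hq'
    rw [heq]
    exact hT.2.1 q'.1 (Finset.mem_Icc.2 hq1.1) q.2 q'.2 (mem_shapeBoxes.1 hq).2.1.1 hle hq1.2.2

theorem eq_readingTableau (hT : IsSSYT R C r n c T) (hr : ∀ a ∈ Icc 1 R, r a ≤ C)
    (hsep : ∀ q ∈ shapeBoxes R C r, ∀ q' ∈ shapeBoxes R C r, q.1 < q'.1 →
      T q.1 q.2 ≤ T q'.1 q'.2)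
    {q : ℕ × ℕ} (hq : q ∈ shapeBoxes R C r) : T q.1 q.2 = readingTableau r c q.1 q.2 := by
  set B := shapeBoxes R C r
  have htot : rowStart r q.1 + q.2 ≤ rowStart r (R + 1) :=
    (rowStart_add_le_rowStart_iff hq _).2 (Nat.lt_succ_of_le (mem_shapeBoxes.1 hq).1.2)
  have hTn := Finset.mem_Icc.1 (hT.entry_mem_Icc hq)
  have hle : rowStart r q.1 + q.2 ≤ cumContent c (T q.1 q.2) :=
    calc rowStart r q.1 + q.2
        = #(B.filter fun q' => rowStart r q'.1 + q'.2 ≤ rowStart r q.1 + q.2) := by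
          rw [card_filter_rowStart_add_le hr, min_eq_left htot]
      _ ≤ #(B.filter fun q' => T q'.1 q'.2 ≤ T q.1 q.2) :=
          card_le_card fun q' hq' => by
            rw [mem_filter] at hq' ⊢
            exact ⟨hq'.1, hT.le_of_rowStart_add_le hsep hq'.1 hq hq'.2⟩
      _ = cumContent c (T q.1 q.2) := hT.card_filter_le hTn.2
  refine le_antisymm (not_lt.1 fun hlt => ?_) ((sortedEntry_le_iff hle _).2 hle)
  set j := readingTableau r c q.1 q.2
  have hj : rowStart r q.1 + q.2 ≤ cumContent c j := (sortedEntry_le_iff hle _).1 le_rfl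
  have : cumContent c j ≤ rowStart r q.1 + q.2 - 1 :=
    calc cumContent c j = #(B.filter fun q' => T q'.1 q'.2 ≤ j) :=
          (hT.card_filter_le (by omega)).symm
      _ ≤ #(B.filter fun q' => rowStart r q'.1 + q'.2 ≤ rowStart r q.1 + q.2 - 1) :=
          card_le_card fun q' hq' => by
            rw [mem_filter] at hq' ⊢
            refine ⟨hq'.1, Nat.le_sub_one_of_lt (not_le.1 fun h => ?_)⟩
            have := hT.le_of_rowStart_add_le hsep hq hq'.1 h
            omega
      _ ≤ rowStart r q.1 + q.2 - 1 := by
          rw [card_filter_rowStart_add_le hr]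
          exact min_le_left _ _
  have := (mem_shapeBoxes.1 hq).2.1.1
  omega

end IsSSYT

section ReadingTableau

variable {R C n : ℕ} {r c : ℕ → ℕ}

theorem isSSYT_readingTableau (hr : ∀ a ∈ Icc 1 R, r a ≤ C)
    (htot : rowStart r (R + 1) = cumContent c n)
    (hcol : ∀ a, 1 ≤ a → a + 1 ≤ R → ∀ b, 1 ≤ b → b ≤ r a → b ≤ r (a + 1) →
      readingTableau r c a b < readingTableau r c (a + 1) b) :
    IsSSYT R C r n c (readingTableau r c) := by
  have hle : ∀ a ∈ Icc 1 R, ∀ b ≤ r a, rowStart r a + b ≤ cumContent c n := fun a ha b hb =>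
    htot ▸ rowStart_add_le_rowStart (Finset.mem_Icc.1 ha).1 hb
      (Nat.lt_succ_of_le (Finset.mem_Icc.1 ha).2)
  have hcum : ∀ i ≤ n, #((shapeBoxes R C r).filter
      fun q => readingTableau r c q.1 q.2 ≤ i) = cumContent c i := fun i hi => by
    rw [← min_eq_left ((cumContent_mono c hi).trans htot.ge), ← card_filter_rowStart_add_le hr]
    refine congrArg card (filter_congr fun q hq => ?_)
    have hq' := mem_shapeBoxes.1 hq
    exact sortedEntry_le_iff (hle q.1 (Finset.mem_Icc.2 hq'.1) q.2 hq'.2.2) i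
  refine ⟨fun a ha b hb => ?_, fun a ha b b' hb hbb' hb' => ?_, hcol, fun i h1 hi => ?_⟩
  · exact Finset.mem_Icc.1 <| sortedEntry_mem_Icc (le_add_left (Finset.mem_Icc.1 hb).1)
      (hle a ha b (Finset.mem_Icc.1 hb).2)
  · exact sortedEntry_mono (hle a ha b' hb') (by omega)
  · rw [← filter_filter]
    exact card_filter_eq_of_card_filter_le hcum h1 hi

end ReadingTableau

section Rho

variable {l k p n : ℕ} {c : ℕ → ℕ}

lemma rhoRow_le (hpl : p ≤ l) (a : ℕ) : rhoRow l k p a ≤ l := by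
  unfold rhoRow; split_ifs <;> omega

lemma rhoRow_antitone (hpl : p ≤ l) : Antitone (rhoRow l k p) := fun a a' h => by
  unfold rhoRow; split_ifs <;> omega

lemma rowStart_rhoRow_succ : ∀ {a : ℕ}, a ≤ 2 * k → rowStart (rhoRow l k p) (a + 1) = a * l
  | 0, _ => by simp [rowStart]
  | a + 1, ha => by
    rw [rowStart_succ _ (by omega), rowStart_rhoRow_succ (by omega), rhoRow, if_pos ha]
    ring

lemma rowStart_rhoRow_two_mul_add_two : rowStart (rhoRow l k p) (2 * k + 2) = 2 * k * l + p := by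
  rw [rowStart_succ _ (by omega), rowStart_rhoRow_succ le_rfl, rhoRow, if_neg (by omega)]

lemma rowStart_rhoRow_eq_cumContent (hsum : ∑ i ∈ Icc 1 n, c i = 2 * (k * l + p)) :
    rowStart (rhoRow l k p) (2 * k + 2 + 1) = cumContent c n := by
  rw [rowStart_succ _ (by omega), rowStart_rhoRow_two_mul_add_two, rhoRow, if_neg (by omega),
    cumContent, hsum]
  ring

lemma two_mul_add_two_le (hp : 1 ≤ p) (hlam : ∑ i ∈ Icc (2 * k + 2) n, c i = p) :
    2 * k + 2 ≤ n := by
  by_contra h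
  rw [Icc_eq_empty (by omega), sum_empty] at hlam
  omega

lemma cumContent_two_mul_add_one (hp : 1 ≤ p) (hsum : ∑ i ∈ Icc 1 n, c i = 2 * (k * l + p))
    (hlam : ∑ i ∈ Icc (2 * k + 2) n, c i = p) : cumContent c (2 * k + 1) = 2 * k * l + p := by
  have hn : 2 * k + 1 ≤ n := by have := two_mul_add_two_le hp hlam; omega
  have h := sum_Ioc_consecutive c (Nat.zero_le _) hn
  rw [← Icc_add_one_left_eq_Ioc, ← Icc_add_one_left_eq_Ioc, ← Icc_add_one_left_eq_Ioc] at h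
  rw [cumContent]
  simp only [zero_add, hsum, show 2 * k + 1 + 1 = 2 * k + 2 by rfl, hlam] at h
  linarith

lemma readingTableau_rhoRow_lt (hp : 1 ≤ p) (hbd : ∀ i : ℕ, 1 ≤ i → i ≤ n → c i ≤ l)
    (hsum : ∑ i ∈ Icc 1 n, c i = 2 * (k * l + p)) (hlam : ∑ i ∈ Icc (2 * k + 2) n, c i = p)
    {a b : ℕ} (ha : 1 ≤ a) (ha' : a + 1 ≤ 2 * k + 2) (hb : 1 ≤ b) (hba : b ≤ rhoRow l k p a)
    (hba' : b ≤ rhoRow l k p (a + 1)) :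
    readingTableau (rhoRow l k p) c a b < readingTableau (rhoRow l k p) c (a + 1) b := by
  set r := rhoRow l k p
  have htot := rowStart_rhoRow_eq_cumContent (c := c) hsum
  have ht : rowStart r a + b ≤ cumContent c n :=
    htot ▸ rowStart_add_le_rowStart ha hba (by omega)
  have ht' : rowStart r a + r a + b ≤ cumContent c n :=
    rowStart_succ r ha ▸ htot ▸ rowStart_add_le_rowStart (by omega) hba' (by omega)
  have hlt := cumContent_sortedEntry_lt (by omega) ht
  have hmem := Finset.mem_Icc.1 (sortedEntry_mem_Icc (by omega) ht)
  unfold readingTableau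
  rw [rowStart_succ r ha]
  refine not_le.1 fun h => ?_
  have h' := (sortedEntry_le_iff ht' _).1 h
  by_cases h2k : a ≤ 2 * k
  · have hra : r a = l := if_pos h2k
    have := hbd _ hmem.1 hmem.2
    omega
  · have hra : r a = p := if_neg h2k
    obtain rfl : a = 2 * k + 1 := by omega
    have hstart : rowStart r (2 * k + 1) = 2 * k * l := rowStart_rhoRow_succ le_rfl
    have hS := cumContent_two_mul_add_one hp hsum hlam
    have hle : cumContent c (sortedEntry c (rowStart r (2 * k + 1) + b)) ≤ 2 * k * l + p :=
      hS ▸ cumContent_mono c ((sortedEntry_le_iff ht _).2 (by omega))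
    omega

lemma isProper_readingTableau (hp : 1 ≤ p) (hpl : p ≤ l)
    (hsum : ∑ i ∈ Icc 1 n, c i = 2 * (k * l + p)) :
    IsProper l k (readingTableau (rhoRow l k p) c) := fun q hq hqk => by
  set r := rhoRow l k p
  have hr : 1 ≤ r (q + 2) := by unfold r rhoRow; split_ifs <;> omega
  have hrq : r q = l := if_pos hqk
  refine sortedEntry_mono ((rowStart_rhoRow_eq_cumContent hsum) ▸
    rowStart_add_le_rowStart (by omega) hr (by omega)) ?_
  calc rowStart r q + l = rowStart r (q + 1) := by rw [rowStart_succ r hq, hrq]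
    _ ≤ rowStart r (q + 2) + 1 := (rowStart_mono r (by omega)).trans (Nat.le_succ _)

lemma isRhoSSYT_readingTableau (hp : 1 ≤ p) (hpl : p ≤ l)
    (hbd : ∀ i : ℕ, 1 ≤ i → i ≤ n → c i ≤ l)
    (hsum : ∑ i ∈ Icc 1 n, c i = 2 * (k * l + p)) (hlam : ∑ i ∈ Icc (2 * k + 2) n, c i = p) :
    IsRhoSSYT l k p n c (readingTableau (rhoRow l k p) c) :=
  isSSYT_readingTableau (fun a _ => rhoRow_le hpl a) (rowStart_rhoRow_eq_cumContent hsum)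
    fun _ ha ha' _ hb hba hba' => readingTableau_rhoRow_lt hp hbd hsum hlam ha ha' hb hba hba'

namespace IsRhoSSYT

variable {T : ℕ → ℕ → ℕ}

lemma entry_le_two_mul_add_one (hT : IsRhoSSYT l k p n c T) (hp : 1 ≤ p) (hpl : p ≤ l)
    (hsum : ∑ i ∈ Icc 1 n, c i = 2 * (k * l + p)) (hlam : ∑ i ∈ Icc (2 * k + 2) n, c i = p)
    {q : ℕ × ℕ} (hq : q ∈ shapeBoxes (2 * k + 2) l (rhoRow l k p)) (hq1 : q.1 ≤ 2 * k + 1) :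
    T q.1 q.2 ≤ 2 * k + 1 := by
  set B := shapeBoxes (2 * k + 2) l (rhoRow l k p)
  have hsub : B.filter (fun q => T q.1 q.2 ≤ 2 * k + 1) ⊆
      B.filter fun q => rowStart (rhoRow l k p) q.1 + q.2 ≤ rowStart (rhoRow l k p) (2 * k + 2) :=
    fun q' hq' => by
      rw [mem_filter] at hq' ⊢
      exact ⟨hq'.1, (rowStart_add_le_rowStart_iff hq'.1 _).2
        (Nat.lt_succ_of_le ((IsSSYT.row_le_entry hT (rhoRow_antitone hpl) hq'.1).trans hq'.2))⟩
  have hcard := IsSSYT.card_filter_le hT (i := 2 * k + 1)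
    (by have := two_mul_add_two_le hp hlam; omega)
  rw [cumContent_two_mul_add_one hp hsum hlam] at hcard
  have heq := eq_of_subset_of_card_le hsub (by
    rw [hcard, card_filter_rowStart_add_le (fun a _ => rhoRow_le hpl a),
      rowStart_rhoRow_two_mul_add_two]
    exact min_le_left _ _)
  have hqY : q ∈ B.filter fun q =>
      rowStart (rhoRow l k p) q.1 + q.2 ≤ rowStart (rhoRow l k p) (2 * k + 2) :=
    mem_filter.2 ⟨hq, (rowStart_add_le_rowStart_iff hq _).2 (by omega)⟩
  rw [← heq] at hqY
  exact (mem_filter.1 hqY).2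

lemma entry_le_row_add_one (hT : IsRhoSSYT l k p n c T) (hp : 1 ≤ p) (hpl : p ≤ l)
    (hsum : ∑ i ∈ Icc 1 n, c i = 2 * (k * l + p)) (hlam : ∑ i ∈ Icc (2 * k + 2) n, c i = p)
    {q : ℕ × ℕ} (hq : q ∈ shapeBoxes (2 * k + 2) l (rhoRow l k p)) (hq1 : q.1 ≤ 2 * k + 1) :
    T q.1 q.2 ≤ q.1 + 1 := by
  have hq' := mem_shapeBoxes.1 hq
  -- follow the column of `q` down to its last box in rows `≤ 2k+1`
  obtain ⟨a', ha', ha'k, hqa', hba'⟩ : ∃ a', 2 * k ≤ a' ∧ a' ≤ 2 * k + 1 ∧ q.1 ≤ a' ∧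
      q.2 ≤ rhoRow l k p a' := by
    by_cases hb : q.2 ≤ p
    · exact ⟨2 * k + 1, by omega, le_rfl, hq1, by rw [rhoRow, if_neg (by omega)]; exact hb⟩
    · refine ⟨2 * k, le_rfl, by omega, ?_, by rw [rhoRow, if_pos le_rfl]; omega⟩
      by_contra h
      have : rhoRow l k p q.1 = p := if_neg (by omega)
      omega
  have hdesc :=
    IsSSYT.entry_add_sub_le hT (rhoRow_antitone hpl) hq'.1.1 hq'.2.1.1 a' hqa' (by omega) hba'
  have hlast : T a' q.2 ≤ 2 * k + 1 := hT.entry_le_two_mul_add_one hp hpl hsum hlam (q := (a', q.2))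
    (mem_shapeBoxes.2 ⟨⟨by omega, by omega⟩, hq'.2.1, hba'⟩) ha'k
  omega

theorem eqOnShape_readingTableau (hT : IsRhoSSYT l k p n c T) (hp : 1 ≤ p) (hpl : p ≤ l)
    (hsum : ∑ i ∈ Icc 1 n, c i = 2 * (k * l + p)) (hlam : ∑ i ∈ Icc (2 * k + 2) n, c i = p) :
    EqOnShape (2 * k + 2) (rhoRow l k p) T (readingTableau (rhoRow l k p) c) := by
  have hsep : ∀ q ∈ shapeBoxes (2 * k + 2) l (rhoRow l k p),
      ∀ q' ∈ shapeBoxes (2 * k + 2) l (rhoRow l k p), q.1 < q'.1 → T q.1 q.2 ≤ T q'.1 q'.2 :=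
    fun q hq q' hq' h => by
      have := hT.entry_le_row_add_one hp hpl hsum hlam hq
        (by have := (mem_shapeBoxes.1 hq').1.2; omega)
      have := IsSSYT.row_le_entry hT (rhoRow_antitone hpl) hq'
      omega
  intro a ha b hb
  have hb' := Finset.mem_Icc.1 hb
  exact IsSSYT.eq_readingTableau hT (fun a _ => rhoRow_le hpl a) hsep (q := (a, b))
    (mem_shapeBoxes.2 ⟨Finset.mem_Icc.1 ha, ⟨hb'.1, hb'.2.trans (rhoRow_le hpl a)⟩, hb'.2⟩)

end IsRhoSSYT

theorem stmt1_general (l k p n : ℕ) (c : ℕ → ℕ)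
    (hp : 1 ≤ p) (hpl : p ≤ l)
    (hbd : ∀ i : ℕ, 1 ≤ i → i ≤ n → c i ≤ l)
    (hsum : ∑ i ∈ Finset.Icc 1 n, c i = 2 * (k * l + p))
    (hlam : ∑ i ∈ Finset.Icc (2 * k + 2) n, c i = p) :
    ∃ T : ℕ → ℕ → ℕ, IsRhoSSYT l k p n c T ∧ IsProper l k T ∧
      ∀ T' : ℕ → ℕ → ℕ, IsRhoSSYT l k p n c T' →
        EqOnShape (2 * k + 2) (rhoRow l k p) T' T :=
  ⟨readingTableau (rhoRow l k p) c, isRhoSSYT_readingTableau hp hpl hbd hsum hlam,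
    isProper_readingTableau hp hpl hsum, fun _ hT => hT.eqOnShape_readingTableau hp hpl hsum hlam⟩

/-- If `Λ = p`, there is exactly one semistandard Young tableau of shape
`ϱ = (ℓ^{2k}, p, p)` with content `μ = (c 1, ..., c n)`, and it is proper. -/
theorem stmt1 (l k p n : ℕ) (c : ℕ → ℕ)
    (hl : 1 ≤ l) (hp : 1 ≤ p) (hpl : p ≤ l)
    (hbd : ∀ i : ℕ, 1 ≤ i → i ≤ n → c i ≤ l)
    (hmono : ∀ i j : ℕ, 1 ≤ i → i ≤ j → j ≤ n → c j ≤ c i)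
    (hsum : ∑ i ∈ Finset.Icc 1 n, c i = 2 * (k * l + p))
    (hlam : ∑ i ∈ Finset.Icc (2 * k + 2) n, c i = p) :
    ∃ T : ℕ → ℕ → ℕ, IsRhoSSYT l k p n c T ∧ IsProper l k T ∧
      ∀ T' : ℕ → ℕ → ℕ, IsRhoSSYT l k p n c T' →
        EqOnShape (2 * k + 2) (rhoRow l k p) T' T :=
  stmt1_general l k p n c hp hpl hbd hsum hlam
end Rho
end

section
/- Let ℓ ≥ 1, k ≥ 0, 1 ≤ p ≤ ℓ, n ≥ 3, and let (c_1, ..., c_n) be integers with ℓ ≥ c_1 ≥ c_2 ≥ ... ≥ c_n ≥ 0 and Σ_{i=1}^n c_i = 2(kℓ + p). Suppose Σ_{i=2k+2}^n c_i > p (with this sum interpreted as 0 if 2k+2 > n) and at least n−3 of the amounts c_i equal ℓ. Then 2p ≤ c_{n−2} + c_{n−1} + c_n ≤ 2p + 2ℓ, and either n − 3 = 2k or n − 3 = 2k − 1. -/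
/-- If `Λ > p` and the content is `ℓ`-maximal, then
`2p ≤ c (n-2) + c (n-1) + c n ≤ 2p + 2ℓ` and `n - 3 = 2k` or `n - 3 = 2k - 1`. -/
theorem stmt4 (l k p n : ℕ) (c : ℕ → ℕ)
    (hl : 1 ≤ l) (hp : 1 ≤ p) (hpl : p ≤ l) (hn : 3 ≤ n)
    (hbd : ∀ i : ℕ, 1 ≤ i → i ≤ n → c i ≤ l)
    (hmono : ∀ i j : ℕ, 1 ≤ i → i ≤ j → j ≤ n → c j ≤ c i)
    (hsum : ∑ i ∈ Finset.Icc 1 n, c i = 2 * (k * l + p))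
    (hlam : p < ∑ i ∈ Finset.Icc (2 * k + 2) n, c i)
    (hmax : IsMaximal l n c) :
    (2 * p ≤ c (n - 2) + c (n - 1) + c n ∧
      c (n - 2) + c (n - 1) + c n ≤ 2 * p + 2 * l) ∧
    (n = 2 * k + 3 ∨ n = 2 * k + 2) := by
  -- Step 1: c i = l for all 1 ≤ i ≤ n - 3
  have hc : ∀ i, 1 ≤ i → i ≤ n - 3 → c i = l := by
    intro i h1 h2
    by_contra h
    have hlt : c i < l := lt_of_le_of_ne (hbd i h1 (by omega)) h
    have hsub : (Finset.Icc 1 n).filter (fun j => c j = l) ⊆ Finset.Icc 1 (i - 1) := by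
      intro j hj
      simp only [Finset.mem_filter, Finset.mem_Icc] at hj ⊢
      refine ⟨hj.1.1, ?_⟩
      by_contra hji
      have hij : i ≤ j := by omega
      have := hmono i j h1 hij hj.1.2
      omega
    have hcard := Finset.card_le_card hsub
    rw [Nat.card_Icc] at hcard
    unfold IsMaximal at hmax
    omega
  -- Step 2: n ≥ 2k + 2
  have hge : 2 * k + 2 ≤ n := by
    by_contra hcon
    rw [Finset.Icc_eq_empty (by omega), Finset.sum_empty] at hlam
    omega
  -- Step 3: n ≤ 2k + 3
  have hconst : ∀ a : ℕ, a ≤ n - 3 → ∑ i ∈ Finset.Icc 1 a, c i = a * l := by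
    intro a ha
    have heq : ∀ i ∈ Finset.Icc 1 a, c i = l := by
      intro i hi
      rw [Finset.mem_Icc] at hi
      exact hc i hi.1 (by omega)
    rw [Finset.sum_congr rfl heq, Finset.sum_const, Nat.card_Icc, smul_eq_mul,
      Nat.add_sub_cancel]
  have hle : n ≤ 2 * k + 3 := by
    by_contra hcon
    push_neg at hcon
    have hsplit := Finset.sum_Ioc_consecutive c (Nat.zero_le (2 * k + 1)) (by omega : 2 * k + 1 ≤ n)
    have hs1 : ∑ i ∈ Finset.Ioc 0 n, c i = 2 * (k * l + p) := by
      rw [← Finset.Icc_add_one_left_eq_Ioc]; exact hsum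
    have hs2 : p < ∑ i ∈ Finset.Ioc (2 * k + 1) n, c i := by
      rw [← Finset.Icc_add_one_left_eq_Ioc]; exact hlam
    have hs3 : ∑ i ∈ Finset.Ioc 0 (2 * k + 1), c i = (2 * k + 1) * l := by
      rw [← Finset.Icc_add_one_left_eq_Ioc]
      exact hconst (2 * k + 1) (by omega)
    have hkl : (2 * k + 1) * l = 2 * (k * l) + l := by ring
    have h2k : 2 * (k * l + p) = 2 * (k * l) + 2 * p := by ring
    omega
  -- Step 4: split the total sum at n - 3
  obtain ⟨m, rfl⟩ : ∃ m, n = m + 3 := ⟨n - 3, by omega⟩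
  have hsplit2 : ∑ i ∈ Finset.Icc 1 (m + 3), c i
      = (∑ i ∈ Finset.Icc 1 m, c i) + c (m + 1) + c (m + 2) + c (m + 3) := by
    rw [Finset.sum_Icc_succ_top (by omega), Finset.sum_Icc_succ_top (by omega),
      Finset.sum_Icc_succ_top (by omega)]
  have hpre : ∑ i ∈ Finset.Icc 1 m, c i = m * l := hconst m (by omega)
  rw [hsplit2, hpre] at hsum
  have hred : m + 3 - 2 = m + 1 := rfl
  have hred2 : m + 3 - 1 = m + 2 := rfl
  rw [hred, hred2]
  have h2k : 2 * (k * l + p) = 2 * (k * l) + 2 * p := by ring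
  rcases (by omega : m = 2 * k ∨ m + 1 = 2 * k) with hm | hm
  · have hml : m * l = 2 * (k * l) := by rw [hm]; ring
    refine ⟨⟨by omega, by omega⟩, Or.inl (by omega)⟩
  · have hml : m * l + l = 2 * (k * l) := by
      have : (m + 1) * l = 2 * k * l := by rw [hm]
      calc m * l + l = (m + 1) * l := by ring
        _ = 2 * (k * l) := by rw [this]; ring
    refine ⟨⟨by omega, by omega⟩, Or.inr (by omega)⟩
end

section
/- Let k ≥ 1, q ≥ 1, m ≥ 1 be integers and let σ be the partition ((q+m)^{2k}, q, q), whose conjugate (sequence of column lengths) is ((2k+2)^q, (2k)^m). Suppose T is the unique semistandard Young tableau of shape σ with content μ = (c_1, ..., c_n). Let T^{−c} be the filling obtained from T by deleting its last column (column q+m, which has 2k boxes), and let μ^{−c} = (c'_1, ..., c'_n) be the content obtained from μ by decreasing, for each entry value appearing in the deleted column, the corresponding amount by its multiplicity in that column. Then T^{−c} is the unique semistandard Young tableau of shape ((q+m−1)^{2k}, q, q) with content μ^{−c}. -/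
/-- Row lengths of the shape `((q+m)^{2k}, q, q)`: rows `1, ..., 2k` have length
`q + m` and rows `2k+1`, `2k+2` have length `q`. -/
def sigmaRow (q m k : ℕ) (a : ℕ) : ℕ := if a ≤ 2 * k then q + m else q

namespace Stmt10Aux

def colH (k q : ℕ) (b : ℕ) : ℕ := if b ≤ q then 2 * k + 2 else 2 * k

lemma shape_iff (k q m : ℕ) {a b : ℕ} (ha : a ≤ 2 * k + 2) (hb : b ≤ q + m) :
    b ≤ sigmaRow q m k a ↔ a ≤ colH k q b := by
  simp only [sigmaRow, colH]; split <;> split <;> omega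

lemma colH_mono (k q : ℕ) {b b' : ℕ} (h : b ≤ b') : colH k q b' ≤ colH k q b := by
  simp only [colH]; split <;> split <;> omega

lemma colH_le (k q b : ℕ) : colH k q b ≤ 2 * k + 2 := by
  simp only [colH]; split <;> omega

def Inv (k q m n : ℕ) (c : ℕ → ℕ) (U : ℕ → ℕ → ℕ) : Prop :=
  (∀ a ∈ Finset.Icc 1 (2 * k + 2), ∀ b ∈ Finset.Icc 1 (sigmaRow q m k a),
      1 ≤ U a b ∧ U a b ≤ n) ∧
  (∀ a : ℕ, 1 ≤ a → a + 1 ≤ 2 * k + 2 → ∀ b : ℕ, 1 ≤ b → b ≤ sigmaRow q m k a →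
      b ≤ sigmaRow q m k (a + 1) → U a b < U (a + 1) b) ∧
  (∀ i : ℕ, 1 ≤ i → i ≤ n →
    ((Finset.Icc 1 (2 * k + 2) ×ˢ Finset.Icc 1 (q + m)).filter
      (fun p => p.2 ≤ sigmaRow q m k p.1 ∧ U p.1 p.2 = i)).card = c i)

def swapCol (k q b0 : ℕ) (U : ℕ → ℕ → ℕ) : ℕ → ℕ → ℕ := fun a b =>
  if a ≤ colH k q (b0 + 1) then
    if b = b0 then min (U a b0) (U a (b0 + 1))
    else if b = b0 + 1 then max (U a b0) (U a (b0 + 1))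
    else U a b
  else U a b

lemma swap_ne {k q b0 : ℕ} {U : ℕ → ℕ → ℕ} {a b : ℕ} (h1 : b ≠ b0) (h2 : b ≠ b0 + 1) :
    swapCol k q b0 U a b = U a b := by
  simp only [swapCol, h1, h2, if_false]; split <;> rfl

lemma onshape_left {k q m b0 : ℕ} (hb0 : 1 ≤ b0) (hb1 : b0 + 1 ≤ q + m) {a : ℕ}
    (hA : a ≤ colH k q (b0 + 1)) : b0 ≤ sigmaRow q m k a ∧ b0 + 1 ≤ sigmaRow q m k a := by
  have ha2 : a ≤ 2 * k + 2 := le_trans hA (colH_le k q _)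
  constructor
  · exact (shape_iff k q m ha2 (by omega)).2 (le_trans hA (colH_mono k q (by omega)))
  · exact (shape_iff k q m ha2 hb1).2 hA

lemma content_sum (R C : ℕ) (r : ℕ → ℕ) (U : ℕ → ℕ → ℕ) (i : ℕ) :
    ((Finset.Icc 1 R ×ˢ Finset.Icc 1 C).filter (fun p => p.2 ≤ r p.1 ∧ U p.1 p.2 = i)).card
      = ∑ a ∈ Finset.Icc 1 R, ∑ b ∈ Finset.Icc 1 C, if b ≤ r a ∧ U a b = i then 1 else 0 := by
  rw [Finset.card_filter]
  exact Finset.sum_product _ _ _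

lemma sum_two_le {s : Finset ℕ} {f g : ℕ → ℕ} {x y : ℕ} (hx : x ∈ s) (hy : y ∈ s)
    (hxy : x ≠ y) (h2 : f x + f y ≤ g x + g y)
    (h : ∀ z ∈ s, z ≠ x → z ≠ y → f z = g z) :
    ∑ z ∈ s, f z ≤ ∑ z ∈ s, g z := by
  have hy' : y ∈ s.erase x := Finset.mem_erase.2 ⟨hxy.symm, hy⟩
  rw [← Finset.add_sum_erase s f hx, ← Finset.add_sum_erase s g hx,
      ← Finset.add_sum_erase _ f hy', ← Finset.add_sum_erase _ g hy']
  have hs : ∑ z ∈ (s.erase x).erase y, f z = ∑ z ∈ (s.erase x).erase y, g z := by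
    refine Finset.sum_congr rfl fun z hz => ?_
    have hz1 := Finset.mem_erase.1 hz
    have hz2 := Finset.mem_erase.1 hz1.2
    exact h z hz2.2 hz2.1 hz1.1
  omega

lemma sum_two_eq {s : Finset ℕ} {f g : ℕ → ℕ} {x y : ℕ} (hx : x ∈ s) (hy : y ∈ s)
    (hxy : x ≠ y) (h2 : f x + f y = g x + g y)
    (h : ∀ z ∈ s, z ≠ x → z ≠ y → f z = g z) :
    ∑ z ∈ s, f z = ∑ z ∈ s, g z :=
  le_antisymm (sum_two_le hx hy hxy h2.le h)
    (sum_two_le hx hy hxy h2.ge fun z hz a b => (h z hz a b).symm)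


lemma swap_b0 {k q b0 : ℕ} {U : ℕ → ℕ → ℕ} {a : ℕ} (hA : a ≤ colH k q (b0 + 1)) :
    swapCol k q b0 U a b0 = min (U a b0) (U a (b0 + 1)) := by
  simp [swapCol, hA]

lemma swap_b1 {k q b0 : ℕ} {U : ℕ → ℕ → ℕ} {a : ℕ} (hA : a ≤ colH k q (b0 + 1)) :
    swapCol k q b0 U a (b0 + 1) = max (U a b0) (U a (b0 + 1)) := by
  simp only [swapCol, if_pos hA]
  rw [if_neg (show b0 + 1 ≠ b0 by omega)]
  simp

lemma swap_off {k q b0 : ℕ} {U : ℕ → ℕ → ℕ} {a b : ℕ} (hA : ¬ a ≤ colH k q (b0 + 1)) :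
    swapCol k q b0 U a b = U a b := by
  simp [swapCol, hA]

lemma sum_two_lt {s : Finset ℕ} {f g : ℕ → ℕ} {x y : ℕ} (hx : x ∈ s) (hy : y ∈ s)
    (hxy : x ≠ y) (h2 : f x + f y < g x + g y)
    (h : ∀ z ∈ s, z ≠ x → z ≠ y → f z = g z) :
    ∑ z ∈ s, f z < ∑ z ∈ s, g z := by
  have hy' : y ∈ s.erase x := Finset.mem_erase.2 ⟨hxy.symm, hy⟩
  rw [← Finset.add_sum_erase s f hx, ← Finset.add_sum_erase s g hx,
      ← Finset.add_sum_erase _ f hy', ← Finset.add_sum_erase _ g hy']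
  have hs : ∑ z ∈ (s.erase x).erase y, f z = ∑ z ∈ (s.erase x).erase y, g z := by
    refine Finset.sum_congr rfl fun z hz => ?_
    have hz1 := Finset.mem_erase.1 hz
    have hz2 := Finset.mem_erase.1 hz1.2
    exact h z hz2.2 hz2.1 hz1.1
  omega

lemma inv_swap {k q m n b0 : ℕ} {c : ℕ → ℕ} {U : ℕ → ℕ → ℕ}
    (hb0 : 1 ≤ b0) (hb1 : b0 + 1 ≤ q + m) (hU : Inv k q m n c U) :
    Inv k q m n c (swapCol k q b0 U) := by
  obtain ⟨hrange, hcol, hcont⟩ := hU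
  refine ⟨?_, ?_, ?_⟩
  · -- range
    intro a ha b hb
    rw [Finset.mem_Icc] at ha hb
    by_cases hA : a ≤ colH k q (b0 + 1)
    · obtain ⟨hs0, hs1⟩ := onshape_left (k := k) (m := m) hb0 hb1 hA
      have r0 := hrange a (Finset.mem_Icc.2 ha) b0 (Finset.mem_Icc.2 ⟨hb0, hs0⟩)
      have r1 := hrange a (Finset.mem_Icc.2 ha) (b0 + 1) (Finset.mem_Icc.2 ⟨by omega, hs1⟩)
      have rb := hrange a (Finset.mem_Icc.2 ha) b (Finset.mem_Icc.2 hb)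
      by_cases e0 : b = b0
      · subst e0; rw [swap_b0 hA]; omega
      · by_cases e1 : b = b0 + 1
        · subst e1; rw [swap_b1 hA]; omega
        · rw [swap_ne e0 e1]; exact rb
    · rw [swap_off hA]
      exact hrange a (Finset.mem_Icc.2 ha) b (Finset.mem_Icc.2 hb)
  · -- column strict
    intro a ha haR b hb hba hba1
    have hbqm : b ≤ q + m := by
      have := hba; simp only [sigmaRow] at this; split at this <;> omega
    have hcb : a ≤ colH k q b := (shape_iff k q m (by omega) hbqm).1 hba
    have hcb1 : a + 1 ≤ colH k q b := (shape_iff k q m haR hbqm).1 hba1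
    by_cases e0 : b = b0
    · subst e0
      have hA : a ≤ colH k q (b + 1) ∨ ¬ a ≤ colH k q (b + 1) := em _
      by_cases hA1 : a + 1 ≤ colH k q (b + 1)
      · obtain ⟨hs0, hs1⟩ := onshape_left (k := k) (m := m) hb hb1
          (a := a) (by omega)
        obtain ⟨hs0', hs1'⟩ := onshape_left (k := k) (m := m) hb hb1 (a := a + 1) hA1
        have c0 := hcol a ha haR b hb hs0 hs0'
        have c1 := hcol a ha haR (b + 1) (by omega) hs1 hs1'
        rw [swap_b0 (show a ≤ colH k q (b+1) by omega), swap_b0 hA1]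
        omega
      · by_cases hA : a ≤ colH k q (b + 1)
        · have c0 := hcol a ha haR b hb hba hba1
          rw [swap_b0 hA, swap_off hA1]
          omega
        · rw [swap_off hA, swap_off hA1]
          exact hcol a ha haR b hb hba hba1
    · by_cases e1 : b = b0 + 1
      · subst e1
        have hA1 : a + 1 ≤ colH k q (b0 + 1) := hcb1
        obtain ⟨hs0, hs1⟩ := onshape_left (k := k) (m := m) hb0 hb1 (a := a) (by omega)
        obtain ⟨hs0', hs1'⟩ := onshape_left (k := k) (m := m) hb0 hb1 (a := a + 1) hA1
        have c0 := hcol a ha haR b0 (by omega) hs0 hs0'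
        have c1 := hcol a ha haR (b0 + 1) hb hs1 hs1'
        rw [swap_b1 (show a ≤ colH k q (b0+1) by omega), swap_b1 hA1]
        omega
      · rw [swap_ne e0 e1, swap_ne e0 e1]
        exact hcol a ha haR b hb hba hba1
  · -- content
    intro i hi1 hi2
    have hc := hcont i hi1 hi2
    rw [content_sum] at hc ⊢
    rw [← hc]
    refine Finset.sum_congr rfl fun a ha => ?_
    rw [Finset.mem_Icc] at ha
    by_cases hA : a ≤ colH k q (b0 + 1)
    · obtain ⟨hs0, hs1⟩ := onshape_left (k := k) (m := m) hb0 hb1 hA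
      refine sum_two_eq (x := b0) (y := b0 + 1) (Finset.mem_Icc.2 ⟨hb0, by omega⟩)
        (Finset.mem_Icc.2 ⟨by omega, hb1⟩) (by omega) ?_ ?_
      · rw [swap_b0 hA, swap_b1 hA]
        simp only [hs0, hs1, true_and]
        rcases le_total (U a b0) (U a (b0 + 1)) with h | h
        · rw [min_eq_left h, max_eq_right h]
        · rw [min_eq_right h, max_eq_left h, Nat.add_comm]
      · intro z _ hz1 hz2
        rw [swap_ne hz1 hz2]
    · refine Finset.sum_congr rfl fun b _ => ?_
      rw [swap_off hA]



def phi (k q m : ℕ) (U : ℕ → ℕ → ℕ) : ℕ :=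
  ∑ a ∈ Finset.Icc 1 (2 * k + 2), ∑ b ∈ Finset.Icc 1 (q + m),
    if b ≤ sigmaRow q m k a then b * U a b else 0

def lastSum (k q m : ℕ) (U : ℕ → ℕ → ℕ) : ℕ := ∑ a ∈ Finset.Icc 1 (2 * k), U a (q + m)

lemma sigmaRow_le_qm (q m k a : ℕ) : sigmaRow q m k a ≤ q + m := by
  simp only [sigmaRow]; split <;> omega

lemma minmax_le (w x y : ℕ) : w * x + (w + 1) * y ≤ w * min x y + (w + 1) * max x y := by
  rcases le_total x y with h' | h'
  · rw [min_eq_left h', max_eq_right h']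
  · rw [min_eq_right h', max_eq_left h']
    nlinarith

lemma minmax_lt (w x y : ℕ) (h : y < x) :
    w * x + (w + 1) * y < w * min x y + (w + 1) * max x y := by
  rw [min_eq_right h.le, max_eq_left h.le]
  nlinarith

lemma phi_row_le {k q m b0 : ℕ} {U : ℕ → ℕ → ℕ} (hb0 : 1 ≤ b0) (hb1 : b0 + 1 ≤ q + m)
    (a : ℕ) (ha : a ∈ Finset.Icc 1 (2 * k + 2)) :
    (∑ b ∈ Finset.Icc 1 (q + m), if b ≤ sigmaRow q m k a then b * U a b else 0)
      ≤ ∑ b ∈ Finset.Icc 1 (q + m), if b ≤ sigmaRow q m k a then b * swapCol k q b0 U a b else 0 := by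
  rw [Finset.mem_Icc] at ha
  by_cases hA : a ≤ colH k q (b0 + 1)
  · obtain ⟨hs0, hs1⟩ := onshape_left (k := k) (m := m) hb0 hb1 hA
    refine sum_two_le (x := b0) (y := b0 + 1) (Finset.mem_Icc.2 ⟨hb0, by omega⟩)
      (Finset.mem_Icc.2 ⟨by omega, hb1⟩) (by omega) ?_ ?_
    · rw [swap_b0 hA, swap_b1 hA, if_pos hs0, if_pos hs1, if_pos hs0, if_pos hs1]
      exact minmax_le b0 (U a b0) (U a (b0 + 1))
    · intro z _ hz1 hz2
      rw [swap_ne hz1 hz2]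
  · refine le_of_eq (Finset.sum_congr rfl fun b _ => ?_)
    rw [swap_off hA]

lemma phi_swap_lt {k q m b0 : ℕ} {U : ℕ → ℕ → ℕ} (hb0 : 1 ≤ b0) (hb1 : b0 + 1 ≤ q + m)
    {a' : ℕ} (ha1 : 1 ≤ a') (haA : a' ≤ colH k q (b0 + 1))
    (hviol : U a' (b0 + 1) < U a' b0) :
    phi k q m U < phi k q m (swapCol k q b0 U) := by
  have ha' : a' ∈ Finset.Icc 1 (2 * k + 2) :=
    Finset.mem_Icc.2 ⟨ha1, le_trans haA (colH_le k q _)⟩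
  refine Finset.sum_lt_sum (fun a ha => phi_row_le hb0 hb1 a ha) ⟨a', ha', ?_⟩
  obtain ⟨hs0, hs1⟩ := onshape_left (k := k) (m := m) hb0 hb1 haA
  refine sum_two_lt (x := b0) (y := b0 + 1) (Finset.mem_Icc.2 ⟨hb0, by omega⟩)
    (Finset.mem_Icc.2 ⟨by omega, hb1⟩) (by omega) ?_ ?_
  · rw [swap_b0 haA, swap_b1 haA, if_pos hs0, if_pos hs1, if_pos hs0, if_pos hs1]
    exact minmax_lt b0 (U a' b0) (U a' (b0 + 1)) hviol
  · intro z _ hz1 hz2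
    rw [swap_ne hz1 hz2]

lemma lastSum_swap_eq {k q m b0 : ℕ} {U : ℕ → ℕ → ℕ} (h : b0 + 1 < q + m) :
    lastSum k q m (swapCol k q b0 U) = lastSum k q m U :=
  Finset.sum_congr rfl fun a _ => swap_ne (by omega) (by omega)

lemma lastSum_swap_ge {k q m b0 : ℕ} {U : ℕ → ℕ → ℕ} (h : b0 + 1 = q + m) :
    lastSum k q m U ≤ lastSum k q m (swapCol k q b0 U) := by
  refine Finset.sum_le_sum fun a ha => ?_
  rw [Finset.mem_Icc] at ha
  have hA : a ≤ colH k q (b0 + 1) := by simp only [colH]; split <;> omega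
  rw [← h, swap_b1 hA]
  exact le_max_right _ _

lemma lastSum_swap_gt {k q m b0 : ℕ} {U : ℕ → ℕ → ℕ} (h : b0 + 1 = q + m)
    {a' : ℕ} (ha1 : 1 ≤ a') (ha2 : a' ≤ 2 * k) (hviol : U a' (b0 + 1) < U a' b0) :
    lastSum k q m U < lastSum k q m (swapCol k q b0 U) := by
  refine Finset.sum_lt_sum (fun a ha => ?_) ⟨a', Finset.mem_Icc.2 ⟨ha1, ha2⟩, ?_⟩
  · rw [Finset.mem_Icc] at ha
    have hA : a ≤ colH k q (b0 + 1) := by simp only [colH]; split <;> omega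
    rw [← h, swap_b1 hA]
    exact le_max_right _ _
  · have hA : a' ≤ colH k q (b0 + 1) := by simp only [colH]; split <;> omega
    rw [← h, swap_b1 hA]
    omega

lemma phi_bound {k q m n : ℕ} {c : ℕ → ℕ} {U : ℕ → ℕ → ℕ} (hU : Inv k q m n c U) :
    phi k q m U ≤ (2 * k + 2) * ((q + m) * ((q + m) * n)) := by
  have houter : ∀ a ∈ Finset.Icc 1 (2 * k + 2),
      (∑ b ∈ Finset.Icc 1 (q + m), if b ≤ sigmaRow q m k a then b * U a b else 0)
        ≤ (q + m) * ((q + m) * n) := by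
    intro a ha
    have hinner : ∀ b ∈ Finset.Icc 1 (q + m),
        (if b ≤ sigmaRow q m k a then b * U a b else 0) ≤ (q + m) * n := by
      intro b hb
      rw [Finset.mem_Icc] at hb
      split
      · next hba =>
          have := (hU.1 a ha b (Finset.mem_Icc.2 ⟨hb.1, hba⟩)).2
          exact Nat.mul_le_mul hb.2 this
      · exact Nat.zero_le _
    have := Finset.sum_le_card_nsmul _ _ _ hinner
    rw [Nat.card_Icc, smul_eq_mul] at this
    simpa using this
  have := Finset.sum_le_card_nsmul _ _ _ houter
  rw [Nat.card_Icc, smul_eq_mul] at this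
  simpa [phi] using this



lemma row_mono {L : ℕ} {f : ℕ → ℕ} (h : ∀ b, 1 ≤ b → b + 1 ≤ L → f b ≤ f (b + 1)) :
    ∀ b b', 1 ≤ b → b ≤ b' → b' ≤ L → f b ≤ f b' := by
  intro b b' hb hbb'
  induction b', hbb' using Nat.le_induction with
  | base => intro _; exact le_rfl
  | succ b' hbb ih => intro hL; exact le_trans (ih (by omega)) (h b' (by omega) hL)

lemma small_le_qm1 {q m k : ℕ} (hm : 1 ≤ m) (a : ℕ) : sigmaRow q (m - 1) k a ≤ q + m - 1 := by
  by_cases h : a ≤ 2 * k <;> simp [sigmaRow, h] <;> omega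

lemma small_iff {q m k : ℕ} {a b : ℕ} (hb : b ≤ q + m - 1) :
    (b ≤ sigmaRow q (m - 1) k a ↔ b ≤ sigmaRow q m k a) := by
  by_cases h : a ≤ 2 * k <;> simp [sigmaRow, h] <;> omega

lemma big_last {q m k a : ℕ} (hm : 1 ≤ m) (h : q + m ≤ sigmaRow q m k a) : a ≤ 2 * k := by
  by_cases h2 : a ≤ 2 * k
  · exact h2
  · exfalso; simp [sigmaRow, h2] at h; omega

lemma last_on_shape {q m k a : ℕ} (h : a ≤ 2 * k) : q + m ≤ sigmaRow q m k a := by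
  simp [sigmaRow, h]

lemma small_le_big (q m k a : ℕ) : sigmaRow q (m - 1) k a ≤ sigmaRow q m k a := by
  by_cases h : a ≤ 2 * k <;> simp [sigmaRow, h] <;> omega

lemma content_split (k q : ℕ) {m : ℕ} (hm : 1 ≤ m) (W : ℕ → ℕ → ℕ) (i : ℕ) :
    ((Finset.Icc 1 (2 * k + 2) ×ˢ Finset.Icc 1 (q + m)).filter
      (fun p => p.2 ≤ sigmaRow q m k p.1 ∧ W p.1 p.2 = i)).card
    = ((Finset.Icc 1 (2 * k + 2) ×ˢ Finset.Icc 1 (q + m - 1)).filter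
      (fun p => p.2 ≤ sigmaRow q (m - 1) k p.1 ∧ W p.1 p.2 = i)).card
      + ((Finset.Icc 1 (2 * k)).filter (fun a => W a (q + m) = i)).card := by
  rw [content_sum, content_sum]
  have hstep : ∀ a ∈ Finset.Icc 1 (2 * k + 2),
      (∑ b ∈ Finset.Icc 1 (q + m), if b ≤ sigmaRow q m k a ∧ W a b = i then 1 else 0)
      = (∑ b ∈ Finset.Icc 1 (q + m - 1), if b ≤ sigmaRow q (m - 1) k a ∧ W a b = i then 1 else 0)
        + (if a ≤ 2 * k ∧ W a (q + m) = i then 1 else 0) := by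
    intro a ha
    have hqm : q + m = (q + m - 1) + 1 := by omega
    rw [hqm, Finset.sum_Icc_succ_top (by omega), ← hqm]
    congr 1
    · refine Finset.sum_congr rfl fun b hb => ?_
      rw [Finset.mem_Icc] at hb
      exact if_congr (and_congr_left' (small_iff (q := q) (m := m) (k := k) (a := a) hb.2).symm)
        rfl rfl
    · refine if_congr (and_congr_left' ?_) rfl rfl
      constructor
      · exact fun h => big_last hm h
      · exact fun h => last_on_shape h
  rw [Finset.sum_congr rfl hstep, Finset.sum_add_distrib]
  congr 1
  have hset : (Finset.Icc 1 (2 * k + 2)).filter (fun a => a ≤ 2 * k ∧ W a (q + m) = i)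
      = (Finset.Icc 1 (2 * k)).filter (fun a => W a (q + m) = i) := by
    ext a
    simp only [Finset.mem_filter, Finset.mem_Icc]
    constructor
    · rintro ⟨⟨h1, h2⟩, h3, h4⟩; exact ⟨⟨h1, h3⟩, h4⟩
    · rintro ⟨⟨h1, h3⟩, h4⟩; exact ⟨⟨h1, by omega⟩, h3, h4⟩
  rw [← hset, Finset.card_filter]

lemma main_ind (k q m n : ℕ) (c : ℕ → ℕ) (T : ℕ → ℕ → ℕ) (hq : 1 ≤ q)
    (huniq : ∀ T' : ℕ → ℕ → ℕ, IsSSYT (2 * k + 2) (q + m) (sigmaRow q m k) n c T' →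
      EqOnShape (2 * k + 2) (sigmaRow q m k) T' T) :
    ∀ fuel U, Inv k q m n c U →
      (2 * k + 2) * ((q + m) * ((q + m) * n)) + 1 ≤ phi k q m U + fuel →
      lastSum k q m U ≤ lastSum k q m T := by
  intro fuel
  induction fuel with
  | zero =>
    intro U hU hfuel
    have := phi_bound hU
    omega
  | succ f ih =>
    intro U hU hfuel
    by_cases hv : ∃ a b, 1 ≤ a ∧ a ≤ 2 * k + 2 ∧ 1 ≤ b ∧ b + 1 ≤ sigmaRow q m k a ∧
        U a (b + 1) < U a b
    · obtain ⟨a, b0, ha1, ha2, hb0, hba, hviol⟩ := hv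
      have hbq : b0 + 1 ≤ q + m := le_trans hba (sigmaRow_le_qm q m k a)
      have hA : a ≤ colH k q (b0 + 1) := (shape_iff k q m ha2 hbq).1 hba
      have hU' := inv_swap (n := n) (c := c) hb0 hbq hU
      have hphi := phi_swap_lt (m := m) hb0 hbq ha1 hA hviol
      have hlast : lastSum k q m U ≤ lastSum k q m (swapCol k q b0 U) := by
        rcases lt_or_eq_of_le hbq with h | h
        · exact (lastSum_swap_eq h).ge
        · exact lastSum_swap_ge h
      exact le_trans hlast (ih _ hU' (by omega))
    · push_neg at hv
      have hssyt : IsSSYT (2 * k + 2) (q + m) (sigmaRow q m k) n c U := by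
        refine ⟨hU.1, ?_, hU.2.1, hU.2.2⟩
        intro a ha b b' hb hbb' hb'
        rw [Finset.mem_Icc] at ha
        exact row_mono (L := sigmaRow q m k a) (f := U a)
          (fun b hb1 hb2 => hv a b ha.1 ha.2 hb1 hb2) b b' hb hbb' hb'
      have heq := huniq U hssyt
      refine le_of_eq (Finset.sum_congr rfl fun a ha => ?_)
      rw [Finset.mem_Icc] at ha
      exact heq a (Finset.mem_Icc.2 ⟨ha.1, by omega⟩) (q + m)
        (Finset.mem_Icc.2 ⟨by omega, last_on_shape ha.2⟩)



end Stmt10Aux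

open Stmt10Aux

/-- If `T` is the unique semistandard Young tableau of shape `((q+m)^{2k}, q, q)`
with content `μ`, then the tableau obtained by deleting the last column of `T`
is the unique semistandard Young tableau of shape `((q+m-1)^{2k}, q, q)` whose
content is `μ` diminished by the multiplicities of the entries of the deleted
column. -/
theorem stmt10 (k q m n : ℕ) (hk : 1 ≤ k) (hq : 1 ≤ q) (hm : 1 ≤ m)
    (c : ℕ → ℕ) (T : ℕ → ℕ → ℕ)
    (hT : IsSSYT (2 * k + 2) (q + m) (sigmaRow q m k) n c T)
    (huniq : ∀ T' : ℕ → ℕ → ℕ, IsSSYT (2 * k + 2) (q + m) (sigmaRow q m k) n c T' →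
      EqOnShape (2 * k + 2) (sigmaRow q m k) T' T) :
    IsSSYT (2 * k + 2) (q + m - 1) (sigmaRow q (m - 1) k) n
      (fun i => c i - ((Finset.Icc 1 (2 * k)).filter (fun a => T a (q + m) = i)).card) T ∧
    ∀ T' : ℕ → ℕ → ℕ,
      IsSSYT (2 * k + 2) (q + m - 1) (sigmaRow q (m - 1) k) n
        (fun i => c i - ((Finset.Icc 1 (2 * k)).filter (fun a => T a (q + m) = i)).card) T' →
      EqOnShape (2 * k + 2) (sigmaRow q (m - 1) k) T' T := by
  classical
  obtain ⟨hTr, hTrow, hTcol, hTcont⟩ := hT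
  have hsplitT : ∀ i, 1 ≤ i → i ≤ n →
      ((Finset.Icc 1 (2 * k + 2) ×ˢ Finset.Icc 1 (q + m - 1)).filter
        (fun p => p.2 ≤ sigmaRow q (m - 1) k p.1 ∧ T p.1 p.2 = i)).card
        = c i - ((Finset.Icc 1 (2 * k)).filter (fun a => T a (q + m) = i)).card
        ∧ ((Finset.Icc 1 (2 * k)).filter (fun a => T a (q + m) = i)).card ≤ c i := by
    intro i h1 h2
    have hsp := content_split k q hm T i
    rw [hTcont i h1 h2] at hsp
    omega
  constructor
  · refine ⟨?_, ?_, ?_, ?_⟩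
    · intro a ha b hb
      rw [Finset.mem_Icc] at hb
      exact hTr a ha b (Finset.mem_Icc.2 ⟨hb.1, le_trans hb.2 (small_le_big q m k a)⟩)
    · intro a ha b b' hb hbb' hb'
      exact hTrow a ha b b' hb hbb' (le_trans hb' (small_le_big q m k a))
    · intro a h1 h2 b hb hba hba1
      exact hTcol a h1 h2 b hb (le_trans hba (small_le_big q m k a))
        (le_trans hba1 (small_le_big q m k (a + 1)))
    · intro i h1 h2
      exact (hsplitT i h1 h2).1
  · intro T' hT'
    obtain ⟨hr', hrow', hcol', hcont'⟩ := hT'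
    set U : ℕ → ℕ → ℕ := fun a b => if b = q + m then T a (q + m) else T' a b with hUdef
    have hUeq : ∀ a b, b ≠ q + m → U a b = T' a b := fun a b h => by simp [hUdef, h]
    have hUlast : ∀ a, U a (q + m) = T a (q + m) := fun a => by simp [hUdef]
    have hInv : Inv k q m n c U := by
      refine ⟨?_, ?_, ?_⟩
      · intro a ha b hb
        rw [Finset.mem_Icc] at hb
        by_cases hbq : b = q + m
        · rw [hbq, hUlast a]
          exact hTr a ha (q + m) (Finset.mem_Icc.2 ⟨by omega, hbq ▸ hb.2⟩)
        · rw [hUeq a b hbq]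
          have hb1 : b ≤ q + m - 1 := by
            have := le_trans hb.2 (sigmaRow_le_qm q m k a); omega
          exact hr' a ha b (Finset.mem_Icc.2 ⟨hb.1, (small_iff (k := k) (a := a) hb1).2 hb.2⟩)
      · intro a h1 h2 b hb hba hba1
        by_cases hbq : b = q + m
        · rw [hbq, hUlast a, hUlast (a + 1)]
          exact hTcol a h1 h2 (q + m) (by omega) (hbq ▸ hba) (hbq ▸ hba1)
        · rw [hUeq a b hbq, hUeq (a + 1) b hbq]
          have hb1 : b ≤ q + m - 1 := by
            have := le_trans hba (sigmaRow_le_qm q m k a); omega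
          exact hcol' a h1 h2 b hb ((small_iff (k := k) (a := a) hb1).2 hba)
            ((small_iff (k := k) (a := a + 1) hb1).2 hba1)
      · intro i h1 h2
        rw [content_split k q hm U i]
        have e1 : ((Finset.Icc 1 (2 * k + 2) ×ˢ Finset.Icc 1 (q + m - 1)).filter
            (fun p => p.2 ≤ sigmaRow q (m - 1) k p.1 ∧ U p.1 p.2 = i)).card
            = c i - ((Finset.Icc 1 (2 * k)).filter (fun a => T a (q + m) = i)).card := by
          have hc : ((Finset.Icc 1 (2 * k + 2) ×ˢ Finset.Icc 1 (q + m - 1)).filter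
              (fun p => p.2 ≤ sigmaRow q (m - 1) k p.1 ∧ T' p.1 p.2 = i)).card
              = c i - ((Finset.Icc 1 (2 * k)).filter (fun a => T a (q + m) = i)).card :=
            hcont' i h1 h2
          rw [← hc]
          congr 1
          refine Finset.filter_congr fun p hp => ?_
          rw [Finset.mem_product, Finset.mem_Icc, Finset.mem_Icc] at hp
          rw [hUeq p.1 p.2 (by omega)]
        have e2 : ((Finset.Icc 1 (2 * k)).filter (fun a => U a (q + m) = i)).card
            = ((Finset.Icc 1 (2 * k)).filter (fun a => T a (q + m) = i)).card := by
          congr 1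
          exact Finset.filter_congr fun a _ => by rw [hUlast a]
        rw [e1, e2]
        have := (hsplitT i h1 h2).2
        omega
    have hnov : ¬ ∃ a b, 1 ≤ a ∧ a ≤ 2 * k + 2 ∧ 1 ≤ b ∧ b + 1 ≤ sigmaRow q m k a ∧
        U a (b + 1) < U a b := by
      rintro ⟨a, b0, ha1, ha2, hb0, hba, hviol⟩
      have hbq : b0 + 1 ≤ q + m := le_trans hba (sigmaRow_le_qm q m k a)
      by_cases hcase : b0 + 1 = q + m
      · have ha2k : a ≤ 2 * k := big_last hm (hcase ▸ hba)
        have hlastT : lastSum k q m U = lastSum k q m T :=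
          Finset.sum_congr rfl fun a _ => hUlast a
        have hgt := lastSum_swap_gt (U := U) hcase ha1 ha2k hviol
        have hUswap := inv_swap (n := n) (c := c) hb0 hbq hInv
        have hmain := main_ind k q m n c T hq huniq
          ((2 * k + 2) * ((q + m) * ((q + m) * n)) + 1) (swapCol k q b0 U) hUswap
          (by omega)
        omega
      · have hb1 : b0 + 1 ≤ q + m - 1 := by omega
        have h1 := hUeq a b0 (by omega)
        have h2 := hUeq a (b0 + 1) (by omega)
        have := hrow' a (Finset.mem_Icc.2 ⟨ha1, ha2⟩) b0 (b0 + 1) hb0 (by omega)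
          ((small_iff (k := k) (a := a) hb1).2 hba)
        omega
    have hssyt : IsSSYT (2 * k + 2) (q + m) (sigmaRow q m k) n c U := by
      push_neg at hnov
      refine ⟨hInv.1, ?_, hInv.2.1, hInv.2.2⟩
      intro a ha b b' hb hbb' hb'
      rw [Finset.mem_Icc] at ha
      exact row_mono (L := sigmaRow q m k a) (f := U a)
        (fun b hb1 hb2 => hnov a b ha.1 ha.2 hb1 hb2) b b' hb hbb' hb'
    have heq := huniq U hssyt
    intro a ha b hb
    rw [Finset.mem_Icc] at hb
    have hb1 : b ≤ q + m - 1 := le_trans hb.2 (small_le_qm1 hm a)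
    rw [← hUeq a b (by omega)]
    exact heq a ha b (Finset.mem_Icc.2 ⟨hb.1,
      (small_iff (k := k) (a := a) hb1).1 hb.2⟩)
end

section
/- For an integer N ≥ 2 and nonnegative integers (c_1, ..., c_{N−1}), define the Casimir number Cas_N(c_1, ..., c_{N−1}) = (1/N)·Σ_{i=1}^{N−1} (N−i)·i·c_i² + (2/N)·Σ_{1 ≤ i < j ≤ N−1} (N−j)·i·c_i·c_j + Σ_{i=1}^{N−1} (N−i)·i·c_i (a rational number). Let r ≥ 1, m ≥ 1, and let (c_1, ..., c_r) be nonnegative integers. Define the vertically scaled coefficient vector (C_1, ..., C_{m(r+1)−1}) for sl_{m(r+1)} by C_{mj} = m·c_j for 1 ≤ j ≤ r and C_i = 0 whenever i is not a multiple of m. Then Cas_{m(r+1)}(C_1, ..., C_{m(r+1)−1}) = m³ · Cas_{r+1}(c_1, ..., c_r). -/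
/-- The Casimir number of the weight `∑ i, c i • ω i` for `sl_N`. -/
def Cas (N : ℕ) (c : ℕ → ℕ) : ℚ :=
  (1 / (N : ℚ)) * ∑ i ∈ Finset.Icc 1 (N - 1),
      ((N : ℚ) - (i : ℚ)) * (i : ℚ) * (c i : ℚ) ^ 2
  + (2 / (N : ℚ)) * ∑ i ∈ Finset.Icc 1 (N - 1), ∑ j ∈ Finset.Icc (i + 1) (N - 1),
      ((N : ℚ) - (j : ℚ)) * (i : ℚ) * (c i : ℚ) * (c j : ℚ)
  + ∑ i ∈ Finset.Icc 1 (N - 1), ((N : ℚ) - (i : ℚ)) * (i : ℚ) * (c i : ℚ)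

/-!
Only indices divisible by `m` carry nonzero coefficients, so every sum over `0 < i < m N` in
`Cas (m N)` collapses to a sum over `i = m k` with `0 < k < N`. Each summand then equals `m ^ 3`
times the corresponding summand of `Cas N`: the quadratic terms gain `m ^ 4` against the prefactor
`1 / (m N)`, the linear term gains `m ^ 3` directly.
-/

open Finset

theorem Nat.Icc_add_one_sub_one_eq_Ioo (a b : ℕ) : Icc (a + 1) (b - 1) = Ioo a b := by
  rw [Icc_add_one_left_eq_Ioc, Ioc_sub_one_right_eq_Ioo]

theorem Nat.preimage_mul_left_Ioo {m : ℕ} (hm : 0 < m) (a b : ℕ) :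
    (Ioo (m * a) (m * b)).preimage (m * ·) (mul_right_injective₀ hm.ne').injOn = Ioo a b := by
  ext k
  simp [Nat.mul_lt_mul_left hm]

theorem Nat.sum_Ioo_mul_of_support_dvd {M : Type*} [AddCommMonoid M] {m : ℕ} (hm : 0 < m)
    (a b : ℕ) {F : ℕ → M} (hF : ∀ i, ¬ m ∣ i → F i = 0) :
    ∑ i ∈ Ioo (m * a) (m * b), F i = ∑ k ∈ Ioo a b, F (m * k) := by
  rw [← preimage_mul_left_Ioo hm a b]
  refine (sum_preimage _ _ _ F fun i _ hi => hF i ?_).symm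
  rintro ⟨k, rfl⟩
  exact hi ⟨k, rfl⟩

theorem Cas_mul_of_support_dvd {m N : ℕ} {C c : ℕ → ℕ}
    (hC0 : ∀ i, ¬ m ∣ i → C i = 0) (hC : ∀ k, C (m * k) = m * c k) :
    Cas (m * N) C = m ^ 3 * Cas N c := by
  rcases m.eq_zero_or_pos with rfl | hm
  · simp [Cas]
  have hm' : (m : ℚ) ≠ 0 := by positivity
  have hC0' (i : ℕ) (hi : ¬ m ∣ i) : (C i : ℚ) = 0 := by rw [hC0 i hi, Nat.cast_zero]
  have reindex := Nat.sum_Ioo_mul_of_support_dvd (M := ℚ) hm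
  simp only [Cas, Nat.Icc_add_one_sub_one_eq_Ioo]
  rw [← mul_zero m,
    reindex _ _ fun i hi => by rw [hC0' i hi]; ring,
    reindex _ _ fun i hi => by simp only [hC0' i hi, mul_zero, zero_mul, sum_const_zero],
    reindex _ _ fun i hi => by rw [hC0' i hi]; ring,
    sum_congr rfl fun k _ => reindex k N fun i hi => by rw [hC0' i hi, mul_zero]]
  simp only [hC, Nat.cast_mul, mul_zero, mul_add, mul_sum]
  congr 1
  congr 1
  · refine sum_congr rfl fun i _ => ?_
    field_simp
  · refine sum_congr rfl fun i _ => sum_congr rfl fun j _ => ?_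
    field_simp
  · refine sum_congr rfl fun i _ => ?_
    ring

theorem stmt13_general (r m : ℕ) (c : ℕ → ℕ) :
    Cas (m * (r + 1)) (fun i => if m ∣ i then m * c (i / m) else 0) =
      (m : ℚ) ^ 3 * Cas (r + 1) c := by
  refine Cas_mul_of_support_dvd (fun i hi => if_neg hi) fun k => ?_
  rcases eq_or_ne m 0 with rfl | hm
  · simp
  · simp [hm]

/-- Casimir numbers scale by `m^3` under vertical scaling: the weight
`∑ j, c j • ω j` for `sl_{r+1}` is sent to the weight with coefficient `m * c j`
at `ω (m * j)` and `0` at indices not divisible by `m`, for `sl_{m(r+1)}`. -/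
theorem stmt13 (r m : ℕ) (hr : 1 ≤ r) (hm : 1 ≤ m) (c : ℕ → ℕ) :
    Cas (m * (r + 1)) (fun i => if m ∣ i then m * c (i / m) else 0) =
      (m : ℚ) ^ 3 * Cas (r + 1) c :=
  stmt13_general r m c
end
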